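/- arXiv:2003.01500 — 3 statements merged into one kernel-verified Lean document; each statement's English description precedes it below -/
import Mathlib

section
/- Let n ≥ 1, let Λ ⊆ ℤ^n be any subset and let ν : ℤ^n → ℤ be any function. Then the set P(Λ,ν) ⊆ ℚ_p^{n+1} is a Borel set and its Haar measure satisfies μ(P(Λ,ν)) = ∑_{λ ∈ Λ} p^{ν(λ)}, an identity in [0,∞] (the sum being the unconditional sum of the nonnegative terms p^{ν(λ)} over λ ∈ Λ). -/
open MeasureTheory ENNReal

namespace KZ

variable (p : ℕ) [Fact p.Prime]

noncomputable instance : MeasurableSpace ℚ_[p] := borel _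
instance : BorelSpace ℚ_[p] := ⟨rfl⟩

/-- `ℚ_p^n`. -/
abbrev QV (n : ℕ) := Fin n → ℚ_[p]

/-- The closed unit polydisc `ℤ_p^n ⊆ ℚ_p^n`. -/
def disc (n : ℕ) : Set (QV p n) := {x | ∀ i, ‖x i‖ ≤ 1}

/-- `ac_ℓ(x) = 1`: `x` is nonzero and the unit `x·p^{-v(x)}` is congruent to `1` mod `p^ℓ`. -/
def acIsOne (ℓ : ℕ) (x : ℚ_[p]) : Prop :=
  x ≠ 0 ∧ ‖x * (p : ℚ_[p]) ^ (-x.valuation) - 1‖ ≤ (p : ℝ) ^ (-(ℓ : ℤ))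

/-- The coordinatewise valuation vector. -/
noncomputable def vvec {n : ℕ} (x : QV p n) : Fin n → ℤ := fun i => (x i).valuation

/-- The set `P(Λ) ⊆ ℚ_p^n` attached to `Λ ⊆ ℤ^n`: all coordinates have `ac = 1` and the
valuation vector lies in `Λ`. -/
def Pset0 {n : ℕ} (Λ : Set (Fin n → ℤ)) : Set (QV p n) :=
  {x | (∀ i, acIsOne p 1 (x i)) ∧ vvec p x ∈ Λ}

/-- The set `P(Λ, ν) ⊆ ℚ_p^{n+1}`: pairs `(x, y)` with `x ∈ P(Λ)`, `ac(y) = 1` and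
`v(y) = -n - 1 - ν(v(x)) - ∑ v(x_i)`. -/
def Pnu0 {n : ℕ} (Λ : Set (Fin n → ℤ)) (ν : (Fin n → ℤ) → ℤ) : Set (QV p (n + 1)) :=
  {z | (∀ i : Fin n, acIsOne p 1 (z (Fin.castSucc i))) ∧
    vvec p (z ∘ Fin.castSucc) ∈ Λ ∧
    acIsOne p 1 (z (Fin.last n)) ∧
    (z (Fin.last n)).valuation =
      -(n : ℤ) - 1 - ν (vvec p (z ∘ Fin.castSucc))
        - ∑ i : Fin n, (z (Fin.castSucc i)).valuation}

/-! The conditions `ac(x) = 1`, `v(x) = m` cut out the closed ball of radius `p^(-m-1)` about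
`p^m`, so `P(Λ,ν)` is the disjoint union over `λ ∈ Λ` of the polydiscs made of such balls, with
valuation vector `(λ, -n-1-ν(λ)-∑ λᵢ)`. The normalized Haar measure on `ℚ_p^(n+1)` is the product of
the normalized one on `ℚ_p`, which gives a ball of radius `p^a` measure `p^a`: multiplication by `p`
scales it by `p⁻¹` because `ℤ_p` is the disjoint union of the `p` cosets of `pℤ_p`. The radii of the
polydisc attached to `λ` multiply to `p^ν(λ)`. -/

open Metric Set Function
open scoped NNReal Pointwise

variable {p : ℕ} [Fact p.Prime]

lemma one_lt_natCast_p : 1 < (p : ℝ) := mod_cast (Fact.out : p.Prime).one_lt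

lemma natCast_p_pos : 0 < (p : ℝ) := zero_lt_one.trans one_lt_natCast_p

lemma natCast_p_ne_zero : (p : ℚ_[p]) ≠ 0 := mod_cast (Fact.out : p.Prime).ne_zero

variable (p) in
noncomputable def padicHaar : Measure ℚ_[p] :=
  Measure.addHaarMeasure ⟨⟨closedBall 0 1, isCompact_closedBall 0 1⟩,
    ⟨0, by
      rw [(IsUltrametricDist.isOpen_closedBall (0 : ℚ_[p]) one_ne_zero).interior_eq]
      exact mem_closedBall_self zero_le_one⟩⟩

instance : (padicHaar p).IsAddHaarMeasure := by unfold padicHaar; infer_instance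

lemma padicHaar_closedBall_zero_one : padicHaar p (closedBall 0 1) = 1 :=
  Measure.addHaarMeasure_self

lemma closedBall_zero_one_eq_iUnion :
    closedBall (0 : ℚ_[p]) 1 = ⋃ k : Fin p, closedBall (k : ℚ_[p]) (p : ℝ)⁻¹ := by
  ext x
  simp only [mem_iUnion, mem_closedBall, dist_eq_norm, sub_zero]
  constructor
  · intro hx
    obtain ⟨k, hk, hxk⟩ := PadicInt.exists_mem_range (⟨x, hx⟩ : ℤ_[p])
    refine ⟨⟨k, hk⟩, ?_⟩
    have hlt : ‖x - (k : ℚ_[p])‖ < (p : ℝ) ^ (-1 + 1 : ℤ) := by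
      rw [neg_add_cancel, zpow_zero]
      exact PadicInt.mem_nonunits.1 hxk
    simpa using (Padic.norm_le_pow_iff_norm_lt_pow_add_one _ _).2 hlt
  · rintro ⟨k, hk⟩
    calc ‖x‖ = ‖(x - k) + k‖ := by rw [sub_add_cancel]
      _ ≤ max ‖x - k‖ ‖(k : ℚ_[p])‖ := IsUltrametricDist.norm_add_le_max _ _
      _ ≤ 1 := max_le (hk.trans (inv_le_one_of_one_le₀ one_lt_natCast_p.le))
          (by exact_mod_cast Padic.norm_int_le_one (p := p) (k : ℤ))

lemma pairwise_disjoint_closedBall_fin :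
    Pairwise (Disjoint on fun k : Fin p => closedBall (k : ℚ_[p]) (p : ℝ)⁻¹) := by
  intro k l hkl
  refine (IsUltrametricDist.closedBall_eq_or_disjoint _ _ _).resolve_left fun h => ?_
  have hl : (l : ℚ_[p]) ∈ closedBall (k : ℚ_[p]) (p : ℝ)⁻¹ :=
    h ▸ mem_closedBall_self (by positivity)
  rw [mem_closedBall, dist_eq_norm] at hl
  have hlt : ‖(l : ℚ_[p]) - k‖ < 1 := hl.trans_lt (inv_lt_one_of_one_lt₀ one_lt_natCast_p)
  rw [← Int.cast_natCast, ← Int.cast_natCast (R := ℚ_[p]) (k : ℕ), ← Int.cast_sub,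
    Padic.norm_intCast_lt_one_iff] at hlt
  have := k.2
  have := l.2
  have := Int.eq_zero_of_abs_lt_dvd hlt (abs_sub_lt_iff.2 ⟨by omega, by omega⟩)
  omega

variable (p) in
noncomputable def unitP : ℚ_[p]ˣ := Units.mk0 p natCast_p_ne_zero

lemma closedBall_zero_zpow (a : ℤ) :
    closedBall (0 : ℚ_[p]) ((p : ℝ) ^ a) = unitP p ^ (-a) • closedBall (0 : ℚ_[p]) 1 := by
  change _ = ((unitP p ^ (-a) : ℚ_[p]ˣ) : ℚ_[p]) • closedBall (0 : ℚ_[p]) 1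
  rw [_root_.smul_closedBall _ _ zero_le_one, smul_zero, mul_one, Units.val_zpow_eq_zpow_val, unitP,
    Units.val_mk0, Padic.norm_p_zpow, neg_neg]

lemma distribHaarChar_unitP : distribHaarChar ℚ_[p] (unitP p) = (p : ℝ≥0)⁻¹ := by
  have hsplit : padicHaar p (closedBall 0 1) = p * padicHaar p (closedBall 0 (p : ℝ)⁻¹) := by
    conv_lhs => rw [closedBall_zero_one_eq_iUnion]
    rw [measure_iUnion pairwise_disjoint_closedBall_fin fun _ => measurableSet_closedBall,
      tsum_fintype]
    simp only [Measure.addHaar_closedBall_center, Finset.sum_const, Finset.card_univ,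
      Fintype.card_fin, nsmul_eq_mul]
  have hscale : closedBall (0 : ℚ_[p]) (p : ℝ)⁻¹ = unitP p • closedBall (0 : ℚ_[p]) 1 := by
    simpa using closedBall_zero_zpow (p := p) (-1)
  rw [hscale, ← distribHaarChar_mul, padicHaar_closedBall_zero_one, mul_one] at hsplit
  refine eq_inv_of_mul_eq_one_right ?_
  exact_mod_cast hsplit.symm

lemma padicHaar_closedBall (c : ℚ_[p]) (a : ℤ) :
    padicHaar p (closedBall c ((p : ℝ) ^ a)) = (p : ℝ≥0∞) ^ a := by
  rw [Measure.addHaar_closedBall_center, closedBall_zero_zpow, ← distribHaarChar_mul,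
    padicHaar_closedBall_zero_one, mul_one, map_zpow, distribHaarChar_unitP, inv_zpow', neg_neg,
    ENNReal.coe_zpow (by simp [(Fact.out : p.Prime).ne_zero]), ENNReal.coe_natCast]

lemma norm_mul_zpow_neg_sub_one (x : ℚ_[p]) (m : ℤ) :
    ‖x * (p : ℚ_[p]) ^ (-m) - 1‖ = ‖x - (p : ℚ_[p]) ^ m‖ * (p : ℝ) ^ m := by
  have hpm : (p : ℚ_[p]) ^ m * (p : ℚ_[p]) ^ (-m) = 1 := by
    rw [← zpow_add₀ natCast_p_ne_zero, add_neg_cancel, zpow_zero]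
  rw [show (p : ℝ) ^ m = ‖(p : ℚ_[p]) ^ (-m)‖ by rw [Padic.norm_p_zpow, neg_neg], ← norm_mul,
    sub_mul, hpm]

lemma valuation_eq_of_norm_sub_zpow_lt {m : ℤ} {x : ℚ_[p]}
    (hx : ‖x - (p : ℚ_[p]) ^ m‖ < (p : ℝ) ^ (-m)) : x ≠ 0 ∧ x.valuation = m := by
  have hnorm : ‖x‖ = (p : ℝ) ^ (-m) := by
    have := IsUltrametricDist.norm_add_eq_max_of_norm_ne_norm
      (x := x - (p : ℚ_[p]) ^ m) (y := (p : ℚ_[p]) ^ m) (by rw [Padic.norm_p_zpow]; exact hx.ne)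
    rwa [sub_add_cancel, Padic.norm_p_zpow, max_eq_right hx.le] at this
  have hx0 : x ≠ 0 := by
    rintro rfl
    exact (zpow_pos natCast_p_pos _).ne' (by simpa using hnorm.symm)
  refine ⟨hx0, ?_⟩
  rw [Padic.norm_eq_zpow_neg_valuation hx0] at hnorm
  simpa using zpow_right_injective₀ natCast_p_pos one_lt_natCast_p.ne' hnorm

lemma acIsOne_one_and_valuation_eq_iff {m : ℤ} {x : ℚ_[p]} :
    acIsOne p 1 x ∧ x.valuation = m ↔
      x ∈ closedBall ((p : ℚ_[p]) ^ m) ((p : ℝ) ^ (-m - 1)) := by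
  have hac : ‖x * (p : ℚ_[p]) ^ (-m) - 1‖ ≤ (p : ℝ) ^ (-((1 : ℕ) : ℤ)) ↔
      ‖x - (p : ℚ_[p]) ^ m‖ ≤ (p : ℝ) ^ (-m - 1) := by
    rw [norm_mul_zpow_neg_sub_one, ← le_div_iff₀ (zpow_pos natCast_p_pos m),
      ← zpow_sub₀ natCast_p_pos.ne']
    ring_nf
  rw [mem_closedBall, dist_eq_norm]
  constructor
  · rintro ⟨⟨-, h⟩, rfl⟩
    exact hac.1 h
  · intro h
    obtain ⟨hx0, rfl⟩ := valuation_eq_of_norm_sub_zpow_lt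
      (h.trans_lt (zpow_lt_zpow_right₀ one_lt_natCast_p (by omega)))
    exact ⟨⟨hx0, hac.2 h⟩, rfl⟩

variable (p) in
def acValDisc {ι : Type*} (e : ι → ℤ) : Set (ι → ℚ_[p]) :=
  {z | ∀ i, acIsOne p 1 (z i) ∧ (z i).valuation = e i}

section acValDisc

variable {ι : Type*}

lemma acValDisc_eq_pi (e : ι → ℤ) :
    acValDisc p e = univ.pi fun i => closedBall ((p : ℚ_[p]) ^ e i) ((p : ℝ) ^ (-e i - 1)) := by
  ext z
  simp only [acValDisc, mem_ofPred_eq, mem_pi, mem_univ, forall_const,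
    acIsOne_one_and_valuation_eq_iff]

lemma measurableSet_acValDisc [Countable ι] (e : ι → ℤ) : MeasurableSet (acValDisc p e) := by
  rw [acValDisc_eq_pi]
  exact MeasurableSet.univ_pi fun _ => measurableSet_closedBall

lemma disjoint_acValDisc {e e' : ι → ℤ} (h : e ≠ e') :
    Disjoint (acValDisc p e) (acValDisc p e') := by
  refine Set.disjoint_left.2 fun z hz hz' => h (funext fun i => ?_)
  rw [← (hz i).2, (hz' i).2]

lemma _root_.ENNReal.zpow_sum {x : ℝ≥0∞} (hx₀ : x ≠ 0) (hx : x ≠ ⊤) (s : Finset ι) (f : ι → ℤ) :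
    x ^ (∑ i ∈ s, f i) = ∏ i ∈ s, x ^ f i := by
  induction s using Finset.cons_induction with
  | empty => simp
  | cons i s hi ih => rw [Finset.sum_cons, Finset.prod_cons, ENNReal.zpow_add hx₀ hx, ih]

lemma pi_padicHaar_acValDisc [Fintype ι] (e : ι → ℤ) :
    Measure.pi (fun _ : ι => padicHaar p) (acValDisc p e) = (p : ℝ≥0∞) ^ ∑ i, (-e i - 1) := by
  rw [acValDisc_eq_pi, Measure.pi_pi, ENNReal.zpow_sum (by simp [(Fact.out : p.Prime).ne_zero])
    (ENNReal.natCast_ne_top p)]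
  simp only [padicHaar_closedBall]

lemma eq_pi_padicHaar [Fintype ι] (μ : Measure (ι → ℚ_[p])) [μ.IsAddHaarMeasure]
    (hμ : μ (univ.pi fun _ => closedBall 0 1) = 1) : μ = Measure.pi fun _ => padicHaar p := by
  have hpi : Measure.pi (fun _ : ι => padicHaar p) (univ.pi fun _ => closedBall 0 1) = 1 := by
    simp [Measure.pi_pi, padicHaar_closedBall_zero_one]
  have hsmul := Measure.isAddLeftInvariant_eq_smul μ (Measure.pi fun _ : ι => padicHaar p)
  have hc : μ.addHaarScalarFactor (Measure.pi fun _ : ι => padicHaar p) = 1 := by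
    have := congrArg (· (univ.pi fun _ : ι => closedBall (0 : ℚ_[p]) 1)) hsmul
    simp only [Measure.smul_apply, hμ, hpi, ENNReal.smul_def, smul_eq_mul, mul_one] at this
    exact_mod_cast this.symm
  rw [hsmul, hc, one_smul]

end acValDisc

noncomputable def nuExponents {n : ℕ} (ν : (Fin n → ℤ) → ℤ) (lam : Fin n → ℤ) : Fin (n + 1) → ℤ :=
  Fin.snoc lam (-(n : ℤ) - 1 - ν lam - ∑ i, lam i)

lemma nuExponents_injective {n : ℕ} (ν : (Fin n → ℤ) → ℤ) : Injective (nuExponents ν) := by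
  intro lam lam' h
  funext i
  simpa [nuExponents] using congrFun h i.castSucc

lemma sum_nuExponents {n : ℕ} (ν : (Fin n → ℤ) → ℤ) (lam : Fin n → ℤ) :
    ∑ i, (-nuExponents ν lam i - 1) = ν lam := by
  simp only [Fin.sum_univ_castSucc, nuExponents, Fin.snoc_castSucc, Fin.snoc_last,
    Finset.sum_sub_distrib, Finset.sum_neg_distrib, Finset.sum_const, Finset.card_univ,
    Fintype.card_fin, nsmul_eq_mul, mul_one]
  push_cast
  ring

lemma Pnu0_eq_iUnion {n : ℕ} (Λ : Set (Fin n → ℤ)) (ν : (Fin n → ℤ) → ℤ) :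
    Pnu0 p Λ ν = ⋃ lam : Λ, acValDisc p (nuExponents ν lam) := by
  ext z
  simp only [Pnu0, acValDisc, mem_ofPred_eq, mem_iUnion, Fin.forall_fin_succ', nuExponents,
    Fin.snoc_castSucc, Fin.snoc_last, Subtype.exists, exists_prop]
  constructor
  · rintro ⟨hac, hΛ, hlast, hval⟩
    exact ⟨_, hΛ, fun i => ⟨hac i, rfl⟩, hlast, hval⟩
  · rintro ⟨lam, hΛ, hinit, hlast, hval⟩
    obtain rfl : vvec p (z ∘ Fin.castSucc) = lam := funext fun i => (hinit i).2
    exact ⟨fun i => (hinit i).1, hΛ, hlast, hval⟩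

lemma disc_eq_pi (n : ℕ) : disc p n = univ.pi fun _ => closedBall 0 1 := by
  ext z
  simp [disc]

theorem measurableSet_and_measure_Pnu_general
    (p : ℕ) [Fact p.Prime] (n : ℕ)
    (Λ : Set (Fin n → ℤ)) (ν : (Fin n → ℤ) → ℤ)
    (μ : Measure (QV p (n + 1))) [μ.IsAddHaarMeasure]
    (hnorm : μ (disc p (n + 1)) = 1) :
    MeasurableSet (Pnu0 p Λ ν) ∧
      μ (Pnu0 p Λ ν) = ∑' lam : Λ, (p : ℝ≥0∞) ^ (ν (lam : Fin n → ℤ)) := by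
  have hμ : μ = Measure.pi fun _ => padicHaar p := eq_pi_padicHaar μ (disc_eq_pi (p := p) _ ▸ hnorm)
  have hdisj : Pairwise (Disjoint on fun lam : Λ => acValDisc p (nuExponents ν lam)) :=
    fun _ _ h => disjoint_acValDisc ((nuExponents_injective ν).ne (Subtype.coe_injective.ne h))
  rw [Pnu0_eq_iUnion]
  refine ⟨MeasurableSet.iUnion fun _ => measurableSet_acValDisc _, ?_⟩
  rw [hμ, measure_iUnion hdisj fun _ => measurableSet_acValDisc _]
  simp only [pi_padicHaar_acValDisc, sum_nuExponents]

/-- `P(Λ,ν) ⊆ ℚ_p^{n+1}` is a Borel set and `μ(P(Λ,ν)) = ∑_{λ ∈ Λ} p^{ν(λ)}` in `[0,∞]`, for the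
Haar measure `μ` on `ℚ_p^{n+1}` normalized by `μ(ℤ_p^{n+1}) = 1`. -/
theorem measurableSet_and_measure_Pnu
    (p : ℕ) [Fact p.Prime] (n : ℕ) (hn : 1 ≤ n)
    (Λ : Set (Fin n → ℤ)) (ν : (Fin n → ℤ) → ℤ)
    (μ : Measure (QV p (n + 1))) [μ.IsAddHaarMeasure]
    (hnorm : μ (disc p (n + 1)) = 1) :
    MeasurableSet (Pnu0 p Λ ν) ∧
      μ (Pnu0 p Λ ν) = ∑' lam : Λ, (p : ℝ≥0∞) ^ (ν (lam : Fin n → ℤ)) :=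
  measurableSet_and_measure_Pnu_general p n Λ ν μ hnorm

end KZ
end

section
/- Let p ≥ 2 be an integer, let m ≥ 1 and k ≥ 1, let b_1, …, b_k ∈ ℤ^m be pairwise distinct vectors, and let g_1, …, g_k be polynomials in m variables with rational coefficients. Suppose that ∑_{j=1}^k g_j(s)·p^{b_j·s} = 0 for every s ∈ ℕ^m, where b_j·s = ∑_{i=1}^m b_{j,i} s_i. Then g_j = 0 for every j. -/
open Polynomial in
lemma poly_zero_of_nat_roots (c : Polynomial ℚ) (h : ∀ n : ℕ, c.eval (n:ℚ) = 0) : c = 0 := by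
  apply Polynomial.eq_zero_of_infinite_isRoot
  apply Set.Infinite.mono (s := Set.range ((↑) : ℕ → ℚ))
  · rintro x ⟨n, rfl⟩; exact h n
  · exact Set.infinite_range_of_injective Nat.cast_injective

lemma mv_zero : ∀ (m : ℕ) (g : MvPolynomial (Fin m) ℚ),
    (∀ s : Fin m → ℕ, MvPolynomial.eval (fun i => (s i : ℚ)) g = 0) → g = 0 := by
  intro m
  induction m with
  | zero =>
    intro g h
    obtain ⟨a, rfl⟩ := MvPolynomial.C_surjective (Fin 0) g
    have := h (fun i => 0)
    simpa using this
  | succ m ih =>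
    intro g h
    have key : ∀ s : Fin m → ℕ,
        Polynomial.map (MvPolynomial.eval (fun i => (s i : ℚ))) (MvPolynomial.finSuccEquiv ℚ m g) = 0 := by
      intro s
      apply poly_zero_of_nat_roots
      intro n
      rw [← MvPolynomial.eval_eq_eval_mv_eval' (fun i => (s i : ℚ)) (n : ℚ) g]
      have harg : (Fin.cons ((n:ℚ)) (fun i => ((s i : ℕ) : ℚ)) : Fin (m+1) → ℚ)
          = fun i => (((Fin.cons n s : Fin (m+1) → ℕ) i : ℕ) : ℚ) := by
        funext i
        refine Fin.cases ?_ ?_ i <;> simp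
      rw [harg]
      exact h (Fin.cons n s)
    have hcoeff : ∀ d, (MvPolynomial.finSuccEquiv ℚ m g).coeff d = 0 := by
      intro d
      apply ih
      intro s
      have := key s
      have := congrArg (fun q => Polynomial.coeff q d) this
      simpa using this
    have : MvPolynomial.finSuccEquiv ℚ m g = 0 := Polynomial.ext fun d => by simp [hcoeff d]
    have := congrArg (MvPolynomial.finSuccEquiv ℚ m).symm this
    simpa using this

lemma baseM_zero : ∀ (m : ℕ) (e : Fin m → ℤ) (M : ℤ), 0 < M → (∀ i, |e i| < M) →
    (∑ i, e i * M ^ (i : ℕ)) = 0 → ∀ i, e i = 0 := by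
  intro m
  induction m with
  | zero => intro e M _ _ _ i; exact i.elim0
  | succ m ih =>
    intro e M hM hbound hsum
    rw [Fin.sum_univ_succ] at hsum
    simp only [Fin.val_zero, pow_zero, mul_one] at hsum
    have hfac : ∑ i : Fin m, e i.succ * M ^ (i.succ : ℕ) = M * ∑ i : Fin m, e i.succ * M ^ (i : ℕ) := by
      rw [Finset.mul_sum]
      congr 1; funext i
      rw [Fin.val_succ, pow_succ]
      ring
    rw [hfac] at hsum
    have hdvd : M ∣ e 0 := by
      refine ⟨-(∑ i : Fin m, e i.succ * M ^ (i : ℕ)), ?_⟩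
      linarith [hsum]
    have he0 : e 0 = 0 := by
      rcases hdvd with ⟨c, hc⟩
      have h0 := hbound 0
      rw [hc] at h0 ⊢
      rcases lt_trichotomy c 0 with hc' | hc' | hc'
      · nlinarith [abs_nonneg (M*c), le_abs_self (M*c), neg_abs_le (M*c)]
      · simp [hc']
      · nlinarith [le_abs_self (M*c)]
    rw [he0, zero_add] at hsum
    have hrest : (∑ i : Fin m, e i.succ * M ^ (i : ℕ)) = 0 := by
      rcases mul_eq_zero.mp hsum with h | h
      · exact absurd h (ne_of_gt hM)
      · exact h
    intro i
    refine Fin.cases ?_ ?_ i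
    · exact he0
    · intro j
      exact ih (fun i => e i.succ) M hM (fun i => hbound i.succ) hrest j

open Polynomial

lemma poly_zero_of_nat_roots' (c : Polynomial ℚ) (h : ∀ n : ℕ, c.eval (n:ℚ) = 0) : c = 0 := by
  apply Polynomial.eq_zero_of_infinite_isRoot
  apply Set.Infinite.mono (s := Set.range ((↑) : ℕ → ℚ))
  · rintro x ⟨n, rfl⟩; exact h n
  · exact Set.infinite_range_of_injective Nat.cast_injective

lemma key_lc (a b : ℚ) (hab : a ≠ b) (c : ℚ[X])
    (h : a • c.comp (X + 1) = b • c) : c = 0 := by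
  by_contra hc
  have hdeg : (X + 1 : ℚ[X]).natDegree = 1 := by
    simpa using natDegree_X_add_C (1 : ℚ)
  have hlc := congrArg leadingCoeff h
  rw [smul_eq_C_mul, smul_eq_C_mul, leadingCoeff_mul, leadingCoeff_mul, leadingCoeff_C,
    leadingCoeff_C, leadingCoeff_comp (by rw [hdeg]; norm_num)] at hlc
  have hmonic : (X + 1 : ℚ[X]).leadingCoeff = 1 := by
    simpa using (monic_X_add_C (1 : ℚ)).leadingCoeff
  rw [hmonic, one_pow, mul_one] at hlc
  exact hab (mul_right_cancel₀ (leadingCoeff_ne_zero.mpr hc) hlc)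

lemma delta_deg (c : ℚ[X]) (d : ℕ) (h : c.natDegree ≤ d + 1) :
    (c.comp (X + 1) - c).natDegree ≤ d := by
  by_cases h0 : c.comp (X + 1) - c = 0
  · simp [h0]
  have hc : c ≠ 0 := by rintro rfl; simp at h0
  by_cases hdc : c.natDegree = 0
  · obtain ⟨a, rfl⟩ := Polynomial.natDegree_eq_zero.mp hdc
    simp at h0
  have hdX : (X + 1 : ℚ[X]).natDegree = 1 := by
    simpa using natDegree_X_add_C (1 : ℚ)
  have hmonic : (X + 1 : ℚ[X]).leadingCoeff = 1 := by
    simpa using (monic_X_add_C (1 : ℚ)).leadingCoeff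
  have hnd : (c.comp (X + 1)).natDegree = c.natDegree := by
    rw [natDegree_comp, hdX, mul_one]
  have hlc : (c.comp (X + 1)).leadingCoeff = c.leadingCoeff := by
    rw [leadingCoeff_comp (by rw [hdX]; norm_num), hmonic, one_pow, mul_one]
  have hcomp0 : c.comp (X + 1) ≠ 0 := by
    intro hz
    have := hlc
    rw [hz, leadingCoeff_zero] at this
    exact hc (leadingCoeff_eq_zero.mp this.symm)
  have hdegeq : (c.comp (X + 1)).degree = c.degree := by
    rw [degree_eq_natDegree hcomp0, degree_eq_natDegree hc, hnd]
  have hlt := degree_sub_lt hdegeq hcomp0 hlc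
  have hlt' : (c.comp (X + 1) - c).natDegree < (c.comp (X + 1)).natDegree :=
    natDegree_lt_natDegree h0 hlt
  rw [hnd] at hlt'
  omega

lemma shift_sum (k : ℕ) (q : Fin k → ℚ) (c : Fin k → ℚ[X])
    (h : ∀ n : ℕ, ∑ j, (c j).eval (n:ℚ) * q j ^ n = 0) (qk : ℚ) :
    ∀ n : ℕ, ∑ j, (q j • (c j).comp (X + 1) - qk • c j).eval (n:ℚ) * q j ^ n = 0 := by
  intro n
  have h1 := h (n + 1)
  push_cast at h1
  simp only [eval_sub, eval_smul, eval_comp, eval_add, eval_X, eval_one, smul_eq_mul, sub_mul]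
  rw [Finset.sum_sub_distrib]
  have e1 : ∑ j, q j * (c j).eval ((n:ℚ) + 1) * q j ^ n
      = ∑ j, (c j).eval ((n:ℚ) + 1) * q j ^ (n + 1) := by
    refine Finset.sum_congr rfl fun j _ => ?_
    rw [pow_succ]; ring
  have e2 : ∑ j, qk * (c j).eval (n:ℚ) * q j ^ n
      = qk * ∑ j, (c j).eval (n:ℚ) * q j ^ n := by
    rw [Finset.mul_sum]
    exact Finset.sum_congr rfl fun j _ => by ring
  rw [e1, e2, h1, h n, mul_zero, sub_zero]

lemma endgame (k : ℕ) (q : Fin (k+1) → ℚ) (hq : ∀ j, q j ≠ 0) (hinj : Function.Injective q)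
    (c : Fin (k+1) → ℚ[X])
    (h : ∀ n : ℕ, ∑ j, (c j).eval (n:ℚ) * q j ^ n = 0)
    (h' : ∀ j : Fin k, q j.castSucc • (c j.castSucc).comp (X + 1)
        - q (Fin.last k) • c j.castSucc = 0) :
    ∀ j, c j = 0 := by
  have hcast : ∀ j : Fin k, c j.castSucc = 0 := by
    intro j
    refine key_lc (q j.castSucc) (q (Fin.last k))
      (fun he => (Fin.castSucc_lt_last j).ne (hinj he)) _ ?_
    rw [← sub_eq_zero]
    exact h' j
  have hlast : c (Fin.last k) = 0 := by
    apply poly_zero_of_nat_roots'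
    intro n
    have hn := h n
    rw [Fin.sum_univ_castSucc] at hn
    simp only [hcast, eval_zero, zero_mul, Finset.sum_const_zero, zero_add] at hn
    exact (mul_eq_zero.mp hn).resolve_right (pow_ne_zero n (hq _))
  intro j
  refine Fin.lastCases hlast hcast j

lemma uni : ∀ (k : ℕ) (q : Fin k → ℚ), (∀ j, q j ≠ 0) → Function.Injective q →
    ∀ (c : Fin k → ℚ[X]), (∀ n : ℕ, ∑ j, (c j).eval (n:ℚ) * q j ^ n = 0) → ∀ j, c j = 0 := by
  intro k
  induction k with
  | zero => intro q _ _ c _ j; exact j.elim0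
  | succ k IH =>
    intro q hq hinj
    suffices aux : ∀ d (c : Fin (k+1) → ℚ[X]), (c (Fin.last k)).natDegree ≤ d →
        (∀ n : ℕ, ∑ j, (c j).eval (n:ℚ) * q j ^ n = 0) → ∀ j, c j = 0 by
      intro c h
      exact aux _ c le_rfl h
    intro d
    induction d with
    | zero =>
      intro c hdeg h
      set c' : Fin (k+1) → ℚ[X] :=
        fun j => q j • (c j).comp (X + 1) - q (Fin.last k) • c j with hc'
      have hsum' : ∀ n : ℕ, ∑ j, (c' j).eval (n:ℚ) * q j ^ n = 0 :=
        shift_sum (k+1) q c h (q (Fin.last k))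
      have hlast0 : c' (Fin.last k) = 0 := by
        obtain ⟨a, ha⟩ := Polynomial.natDegree_eq_zero.mp (Nat.le_zero.mp hdeg)
        simp [hc', ← ha]
      have hsum'' : ∀ n : ℕ, ∑ j : Fin k,
          ((fun j => c' (Fin.castSucc j)) j).eval (n:ℚ) * (q ∘ Fin.castSucc) j ^ n = 0 := by
        intro n
        have hn := hsum' n
        rw [Fin.sum_univ_castSucc, hlast0] at hn
        simpa using hn
      have hz := IH (q ∘ Fin.castSucc) (fun j => hq _) (hinj.comp (Fin.castSucc_injective k))
        (fun j => c' (Fin.castSucc j)) hsum''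
      refine endgame k q hq hinj c h fun j => ?_
      have := hz j
      rw [← sub_eq_zero] at this ⊢
      · simpa [hc'] using this
    | succ d ihd =>
      intro c hdeg h
      set c' : Fin (k+1) → ℚ[X] :=
        fun j => q j • (c j).comp (X + 1) - q (Fin.last k) • c j with hc'
      have hsum' : ∀ n : ℕ, ∑ j, (c' j).eval (n:ℚ) * q j ^ n = 0 :=
        shift_sum (k+1) q c h (q (Fin.last k))
      have hdeg' : (c' (Fin.last k)).natDegree ≤ d := by
        have he : c' (Fin.last k)
            = q (Fin.last k) • ((c (Fin.last k)).comp (X + 1) - c (Fin.last k)) := by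
          simp [hc', smul_sub]
        rw [he]
        exact le_trans (natDegree_smul_le _ _) (delta_deg _ d hdeg)
      have hz := ihd c' hdeg' hsum'
      refine endgame k q hq hinj c h fun j => ?_
      exact hz j.castSucc

open Polynomial

lemma eval_aeval_poly (m : ℕ) (g : MvPolynomial (Fin m) ℚ) (f : Fin m → Polynomial ℚ) (t : ℚ) :
    Polynomial.eval t (MvPolynomial.aeval f g) = MvPolynomial.eval (fun i => (f i).eval t) g := by
  induction g using MvPolynomial.induction_on with
  | C a => simp
  | add p q hp hq => simp [hp, hq]
  | mul_X p i hp => simp [hp]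



theorem polyExp_main
    (p : ℕ) (hp : 2 ≤ p) (m k : ℕ)
    (b : Fin k → Fin m → ℤ) (hb : Function.Injective b)
    (g : Fin k → MvPolynomial (Fin m) ℚ)
    (h : ∀ s : Fin m → ℕ,
      ∑ j : Fin k, (MvPolynomial.eval (fun i => (s i : ℚ)) (g j))
        * (p : ℚ) ^ (∑ i : Fin m, b j i * (s i : ℤ)) = 0) :
    ∀ j, g j = 0 := by
  have hp0 : (p:ℚ) ≠ 0 := by positivity
  have hp1 : (p:ℚ) ≠ 1 := by
    have : (1:ℚ) < (p:ℚ) := by exact_mod_cast (by omega : 1 < p)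
    exact ne_of_gt this
  have hppos : (0:ℚ) < (p:ℚ) := by positivity
  -- bound on entries of b
  set B : ℕ := Finset.univ.sup (fun j : Fin k => Finset.univ.sup fun i : Fin m => (b j i).natAbs)
    with hB
  have hBle : ∀ j i, (b j i).natAbs ≤ B := by
    intro j i
    have h1 : (b j i).natAbs ≤ Finset.univ.sup (fun i : Fin m => (b j i).natAbs) :=
      Finset.le_sup (f := fun i : Fin m => (b j i).natAbs) (Finset.mem_univ i)
    have h2 : Finset.univ.sup (fun i : Fin m => (b j i).natAbs) ≤ B :=
      Finset.le_sup (f := fun j : Fin k => Finset.univ.sup fun i : Fin m => (b j i).natAbs)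
        (Finset.mem_univ j)
    exact le_trans h1 h2
  set M : ℕ := 2 * B + 1 with hM
  set Bdot : Fin k → ℤ := fun j => ∑ i, b j i * (M:ℤ) ^ (i : ℕ) with hBdot
  have hBdot_inj : Function.Injective Bdot := by
    intro j l hjl
    apply hb
    have hMZ : (M:ℤ) = 2*(B:ℤ)+1 := by rw [hM]; push_cast; ring
    have hbound : ∀ i, |b j i - b l i| < (M:ℤ) := by
      intro i
      have h1 : |b j i| ≤ (B:ℤ) := by
        rw [Int.abs_eq_natAbs]
        exact_mod_cast hBle j i
      have h2 : |b l i| ≤ (B:ℤ) := by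
        rw [Int.abs_eq_natAbs]
        exact_mod_cast hBle l i
      have h3 := abs_sub (b j i) (b l i)
      rw [hMZ]
      linarith
    have hsum : ∑ i, (b j i - b l i) * (M:ℤ) ^ (i:ℕ) = 0 := by
      simp only [sub_mul]
      rw [Finset.sum_sub_distrib]
      have : Bdot j = Bdot l := hjl
      rw [hBdot] at this
      simp only at this
      rw [this, sub_self]
    have hz := baseM_zero m (fun i => b j i - b l i) (M:ℤ) (by positivity) hbound hsum
    funext i
    have := hz i
    linarith
  -- the exponential bases
  set q : Fin k → ℚ := fun j => (p:ℚ) ^ (Bdot j) with hqdef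
  have hq : ∀ j, q j ≠ 0 := fun j => zpow_ne_zero _ hp0
  have hqinj : Function.Injective q :=
    Function.Injective.comp (zpow_right_injective₀ hppos hp1) hBdot_inj
  -- evaluate on the line u + M^i * t
  have hgu : ∀ (u : Fin m → ℕ) (j : Fin k),
      MvPolynomial.eval (fun i => (u i : ℚ)) (g j) = 0 := by
    intro u j
    set c : Fin k → Polynomial ℚ := fun j =>
      ((p:ℚ) ^ (∑ i, b j i * (u i : ℤ))) • MvPolynomial.aeval
        (fun i => Polynomial.C (u i : ℚ) + Polynomial.C ((M:ℚ) ^ (i:ℕ)) * Polynomial.X) (g j)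
      with hcdef
    have hsumc : ∀ t : ℕ, ∑ j, (c j).eval (t:ℚ) * q j ^ t = 0 := by
      intro t
      have hs := h (fun i => u i + M ^ (i:ℕ) * t)
      rw [← hs]
      refine Finset.sum_congr rfl fun j _ => ?_
      have hexp : (∑ i, b j i * ((u i + M ^ (i:ℕ) * t : ℕ) : ℤ))
          = (∑ i, b j i * (u i : ℤ)) + (Bdot j) * (t:ℤ) := by
        rw [hBdot]
        simp only
        rw [Finset.sum_mul, ← Finset.sum_add_distrib]
        refine Finset.sum_congr rfl fun i _ => ?_
        push_cast
        ring
      rw [hexp, zpow_add₀ hp0, zpow_mul, zpow_natCast]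
      rw [hcdef]
      simp only [Polynomial.eval_smul, smul_eq_mul, eval_aeval_poly]
      simp only [Polynomial.eval_add, Polynomial.eval_mul, Polynomial.eval_C, Polynomial.eval_X]
      have hargs : (fun i => ((u i + M ^ (i:ℕ) * t : ℕ) : ℚ))
          = fun i : Fin m => (u i : ℚ) + (M:ℚ) ^ (i:ℕ) * t := by
        funext i
        push_cast
        ring
      rw [hargs]
      ring
    have hc0 := uni k q hq hqinj c hsumc j
    rw [hcdef] at hc0
    simp only at hc0
    have hs0 : (MvPolynomial.aeval
        (fun i => Polynomial.C (u i : ℚ) + Polynomial.C ((M:ℚ) ^ (i:ℕ)) * Polynomial.X) (g j)) = 0 := by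
      have hne : ((p:ℚ) ^ (∑ i, b j i * (u i : ℤ))) ≠ 0 := zpow_ne_zero _ hp0
      exact (smul_eq_zero.mp hc0).resolve_left hne
    have := congrArg (Polynomial.eval (0:ℚ)) hs0
    rw [eval_aeval_poly] at this
    simp only [Polynomial.eval_add, Polynomial.eval_mul, Polynomial.eval_C, Polynomial.eval_X,
      mul_zero, add_zero, Polynomial.eval_zero] at this
    exact this
  intro j
  exact mv_zero m (g j) (fun s => hgu s j)



/-- If a finite sum `∑_j g_j(s)·p^{b_j·s}` of polynomials times exponentials (with pairwise
distinct exponent vectors `b_j ∈ ℤ^m`) vanishes for all `s ∈ ℕ^m`, then all the polynomials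
`g_j ∈ ℚ[x_1,…,x_m]` vanish. -/
theorem polyExp_sum_eq_zero
    (p : ℕ) (hp : 2 ≤ p) (m k : ℕ) (hm : 1 ≤ m) (hk : 1 ≤ k)
    (b : Fin k → Fin m → ℤ) (hb : Function.Injective b)
    (g : Fin k → MvPolynomial (Fin m) ℚ)
    (h : ∀ s : Fin m → ℕ,
      ∑ j : Fin k, (MvPolynomial.eval (fun i => (s i : ℚ)) (g j))
        * (p : ℚ) ^ (∑ i : Fin m, b j i * (s i : ℤ)) = 0) :
    ∀ j, g j = 0 :=
  polyExp_main p hp m k b hb g h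
end

section
/- Let r ∈ ℤ be nonzero. Then there exists an integer ℓ > 0 such that the map x ↦ x^r defines a bijection from {x ∈ ℚ_p^× : ac_ℓ(x) = 1} onto {y ∈ ℚ_p^× : ac_{ℓ'}(y) = 1 and v(y) ∈ rℤ}, where ℓ' = ℓ + v(r). -/
/-!
Write `x = p^{v(x)} u` with `‖u‖ = 1`; then `x^r = p^{r v(x)} u^r`, so everything reduces to the
unit balls `‖u - 1‖ ≤ ε`. Since `u^n - 1 = (u - 1) ∑ u^i` and the sum lies within `‖u - 1‖` of
`n`, one gets `‖u^r - 1‖ = ‖r‖ ‖u - 1‖` as soon as `‖u - 1‖ < ‖r‖`. This makes `u ↦ u^r` an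
injection of the ball of radius `ε < ‖r‖` into the ball of radius `‖r‖ ε`, and Hensel's lemma for
`X^n - w` makes it onto. With `ε = p^{-ℓ}`, the condition `ε < ‖r‖` is `ℓ > v(r)`.
-/

namespace KZ

variable (p : ℕ) [Fact p.Prime]

noncomputable def unitPart (x : ℚ_[p]) : ℚ_[p] := x * (p : ℚ_[p]) ^ (-x.valuation)

open Metric Set Finset

section Ultrametric

variable {K : Type*} [NormedField K]

theorem norm_inv_sub_one {w : K} (hw : ‖w‖ = 1) : ‖w⁻¹ - 1‖ = ‖w - 1‖ := by
  have hw0 : w ≠ 0 := norm_ne_zero_iff.mp (by simp [hw])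
  rw [show w⁻¹ - 1 = -(w - 1) * w⁻¹ by field_simp; ring, norm_mul, norm_neg, norm_inv, hw, inv_one,
    mul_one]

variable [IsUltrametricDist K]

theorem norm_eq_of_norm_sub_lt_right {a b : K} (h : ‖a - b‖ < ‖b‖) : ‖a‖ = ‖b‖ :=
  IsUltrametricDist.norm_eq_of_add_norm_lt_max (x := a) (y := -b)
    (by rw [← sub_eq_add_neg, norm_neg]; exact h.trans_le (le_max_right _ _)) |>.trans (norm_neg b)

theorem norm_eq_one_of_norm_sub_one_lt_one {u : K} (h : ‖u - 1‖ < 1) : ‖u‖ = 1 := by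
  simpa using norm_eq_of_norm_sub_lt_right (b := (1 : K)) (by simpa using h)

theorem norm_geom_sum_le_one {u : K} (hu : ‖u‖ ≤ 1) (n : ℕ) : ‖∑ i ∈ range n, u ^ i‖ ≤ 1 :=
  IsUltrametricDist.norm_sum_le_of_forall_le_of_nonneg zero_le_one fun i _ => by
    rw [norm_pow]; exact pow_le_one₀ (norm_nonneg u) hu

theorem norm_pow_sub_one_le {u : K} (hu : ‖u‖ ≤ 1) (n : ℕ) : ‖u ^ n - 1‖ ≤ ‖u - 1‖ := by
  rw [← geom_sum_mul, norm_mul]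
  exact mul_le_of_le_one_left (norm_nonneg _) (norm_geom_sum_le_one hu n)

theorem norm_geom_sum_sub_natCast_le {u : K} (hu : ‖u‖ ≤ 1) (n : ℕ) :
    ‖∑ i ∈ range n, u ^ i - n‖ ≤ ‖u - 1‖ := by
  rw [show ∑ i ∈ range n, u ^ i - n = ∑ i ∈ range n, (u ^ i - 1) by simp [sum_sub_distrib]]
  exact IsUltrametricDist.norm_sum_le_of_forall_le_of_nonneg (norm_nonneg _)
    fun i _ => norm_pow_sub_one_le hu i

theorem norm_pow_sub_one_eq {u : K} (n : ℕ) (h : ‖u - 1‖ < ‖(n : K)‖) :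
    ‖u ^ n - 1‖ = ‖(n : K)‖ * ‖u - 1‖ := by
  have hu : ‖u‖ = 1 := norm_eq_one_of_norm_sub_one_lt_one
    (h.trans_le (IsUltrametricDist.norm_natCast_le_one K n))
  have hsum : ‖∑ i ∈ range n, u ^ i‖ = ‖(n : K)‖ :=
    norm_eq_of_norm_sub_lt_right ((norm_geom_sum_sub_natCast_le hu.le n).trans_lt h)
  rw [← geom_sum_mul, norm_mul, hsum]

theorem norm_zpow_sub_one_eq {u : K} (r : ℤ) (h : ‖u - 1‖ < ‖(r : K)‖) :
    ‖u ^ r - 1‖ = ‖(r : K)‖ * ‖u - 1‖ := by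
  obtain ⟨n, rfl | rfl⟩ := Int.eq_nat_or_neg r
  · simpa using norm_pow_sub_one_eq n (by simpa using h)
  · have h' : ‖u - 1‖ < ‖(n : K)‖ := by simpa using h
    have hu : ‖u‖ = 1 := norm_eq_one_of_norm_sub_one_lt_one
      (h'.trans_le (IsUltrametricDist.norm_natCast_le_one K n))
    rw [zpow_neg, zpow_natCast, norm_inv_sub_one (by rw [norm_pow, hu, one_pow]),
      norm_pow_sub_one_eq n h']
    simp

theorem zpow_mapsTo_closedBall_one (r : ℤ) {ε : ℝ} (hε : ε < ‖(r : K)‖) :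
    MapsTo (· ^ r) (closedBall (1 : K) ε) (closedBall 1 (‖(r : K)‖ * ε)) := fun u hu => by
  rw [mem_closedBall_iff_norm] at hu ⊢
  rw [norm_zpow_sub_one_eq r (hu.trans_lt hε)]
  exact mul_le_mul_of_nonneg_left hu (norm_nonneg _)

theorem zpow_injOn_closedBall_one (r : ℤ) {ε : ℝ} (hε : ε < ‖(r : K)‖) :
    InjOn (· ^ r) (closedBall (1 : K) ε) := by
  intro u hu w hw huw
  rw [mem_closedBall_iff_norm] at hu hw
  have hw1 : ‖w‖ = 1 := norm_eq_one_of_norm_sub_one_lt_one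
    (hw.trans_lt (hε.trans_le (IsUltrametricDist.norm_intCast_le_one K r)))
  have hw0 : w ≠ 0 := norm_ne_zero_iff.mp (hw1 ▸ one_ne_zero)
  have hlt : ‖u / w - 1‖ < ‖(r : K)‖ := by
    rw [show u / w - 1 = ((u - 1) + -(w - 1)) / w by field_simp; ring, norm_div, hw1, div_one]
    refine (IsUltrametricDist.norm_add_le_max _ _).trans_lt (max_lt ?_ ?_)
    · exact hu.trans_lt hε
    · exact (norm_neg (w - 1)).trans_le hw |>.trans_lt hε
  have hroot : (u / w) ^ r = 1 := by
    rw [div_zpow, show u ^ r = w ^ r from huw, div_self (zpow_ne_zero r hw0)]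
  have hzero : ‖(r : K)‖ * ‖u / w - 1‖ = 0 := by
    rw [← norm_zpow_sub_one_eq r hlt, hroot, sub_self, norm_zero]
  have hquot : u / w = 1 := by
    rcases mul_eq_zero.mp hzero with h | h
    · exact absurd h ((norm_nonneg _).trans_lt hlt).ne'
    · exact sub_eq_zero.mp (norm_eq_zero.mp h)
  exact (div_eq_one_iff_eq hw0).mp hquot

end Ultrametric

section Padic

variable {p}

open Polynomial in
theorem exists_pow_eq_of_norm_sub_one_lt (n : ℕ) {w : ℚ_[p]}
    (hw : ‖w - 1‖ < ‖(n : ℚ_[p])‖ ^ 2) :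
    ∃ u : ℚ_[p], ‖u - 1‖ < ‖(n : ℚ_[p])‖ ∧ u ^ n = w := by
  have hn : ‖(n : ℚ_[p])‖ ^ 2 ≤ 1 :=
    pow_le_one₀ (norm_nonneg _) (IsUltrametricDist.norm_natCast_le_one _ n)
  let W : ℤ_[p] := ⟨w, (norm_eq_one_of_norm_sub_one_lt_one (hw.trans_le hn)).le⟩
  have heval (z : ℤ_[p]) : aeval z (X ^ n - C W) = z ^ n - W := by simp
  have hderiv : aeval (1 : ℤ_[p]) (derivative (X ^ n - C W)) = n := by simp [derivative_X_pow]
  obtain ⟨z, hz, hz1, -⟩ := hensels_lemma (p := p) (R := ℤ_[p]) (F := X ^ n - C W) (a := 1)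
    (by rw [heval, hderiv, one_pow, norm_sub_rev]; exact hw)
  rw [heval, sub_eq_zero] at hz
  rw [hderiv] at hz1
  exact ⟨z, hz1, congrArg ((↑) : ℤ_[p] → ℚ_[p]) hz⟩

theorem exists_zpow_eq_of_norm_sub_one_lt (r : ℤ) {w : ℚ_[p]}
    (hw : ‖w - 1‖ < ‖(r : ℚ_[p])‖ ^ 2) :
    ∃ u : ℚ_[p], ‖u - 1‖ < ‖(r : ℚ_[p])‖ ∧ u ^ r = w := by
  obtain ⟨n, rfl | rfl⟩ := Int.eq_nat_or_neg r
  · simpa using exists_pow_eq_of_norm_sub_one_lt n (by simpa using hw)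
  · have hn : ‖(n : ℚ_[p])‖ ^ 2 ≤ 1 :=
      pow_le_one₀ (norm_nonneg _) (IsUltrametricDist.norm_natCast_le_one _ n)
    have hw' : ‖w⁻¹ - 1‖ < ‖(n : ℚ_[p])‖ ^ 2 := by
      simp only [Int.cast_neg, Int.cast_natCast, norm_neg] at hw
      rwa [norm_inv_sub_one (norm_eq_one_of_norm_sub_one_lt_one (hw.trans_le hn))]
    obtain ⟨u, hu, hun⟩ := exists_pow_eq_of_norm_sub_one_lt n hw'
    exact ⟨u, by simpa using hu, by rw [zpow_neg, zpow_natCast, hun, inv_inv]⟩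

theorem zpow_surjOn_closedBall_one {r : ℤ} (hr : r ≠ 0) {ε : ℝ} (hε : ε < ‖(r : ℚ_[p])‖) :
    SurjOn (· ^ r) (closedBall (1 : ℚ_[p]) ε) (closedBall 1 (‖(r : ℚ_[p])‖ * ε)) := by
  intro w hw
  rw [mem_closedBall_iff_norm] at hw
  have hr' : 0 < ‖(r : ℚ_[p])‖ := norm_pos_iff.mpr (Int.cast_ne_zero.mpr hr)
  obtain ⟨u, hu, rfl⟩ := exists_zpow_eq_of_norm_sub_one_lt r
    (hw.trans_lt (by rw [sq]; exact mul_lt_mul_of_pos_left hε hr'))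
  refine ⟨u, ?_, rfl⟩
  rw [norm_zpow_sub_one_eq r hu] at hw
  rw [mem_closedBall_iff_norm]
  exact le_of_mul_le_mul_left hw hr'

theorem zpow_bijOn_closedBall_one {r : ℤ} (hr : r ≠ 0) {ε : ℝ} (hε : ε < ‖(r : ℚ_[p])‖) :
    BijOn (· ^ r) (closedBall (1 : ℚ_[p]) ε) (closedBall 1 (‖(r : ℚ_[p])‖ * ε)) :=
  ⟨zpow_mapsTo_closedBall_one r hε, zpow_injOn_closedBall_one r hε,
    zpow_surjOn_closedBall_one hr hε⟩

theorem acIsOne_iff {ℓ : ℕ} {x : ℚ_[p]} :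
    acIsOne p ℓ x ↔ x ≠ 0 ∧ unitPart p x ∈ closedBall 1 ((p : ℝ) ^ (-(ℓ : ℤ))) := by
  rw [mem_closedBall_iff_norm]; rfl

theorem unitPart_zpow (x : ℚ_[p]) (r : ℤ) : unitPart p (x ^ r) = unitPart p x ^ r := by
  simp only [unitPart, Padic.valuation_zpow, mul_zpow, ← zpow_mul, mul_neg, mul_comm]

theorem zpow_valuation_mul_unitPart (x : ℚ_[p]) :
    (p : ℚ_[p]) ^ x.valuation * unitPart p x = x := by
  have hp : (p : ℚ_[p]) ≠ 0 := NeZero.ne _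
  rw [unitPart, mul_left_comm, ← zpow_add₀ hp, add_neg_cancel, zpow_zero, mul_one]

theorem valuation_eq_zero_of_norm_eq_one {u : ℚ_[p]} (hu : ‖u‖ = 1) : u.valuation = 0 := by
  have h := (Padic.norm_le_one_iff_val_nonneg u).mp hu.le
  have h' := (Padic.norm_le_one_iff_val_nonneg u⁻¹).mp (by rw [norm_inv, hu, inv_one])
  rw [Padic.valuation_inv] at h'
  omega

theorem valuation_zpow_mul {u : ℚ_[p]} (hu : ‖u‖ = 1) (n : ℤ) :
    ((p : ℚ_[p]) ^ n * u).valuation = n := by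
  have hp : (p : ℚ_[p]) ≠ 0 := NeZero.ne _
  rw [Padic.valuation_mul (zpow_ne_zero n hp) (norm_ne_zero_iff.mp (hu ▸ one_ne_zero)),
    Padic.valuation_zpow, Padic.valuation_p, mul_one, valuation_eq_zero_of_norm_eq_one hu,
    add_zero]

theorem unitPart_zpow_mul {u : ℚ_[p]} (hu : ‖u‖ = 1) (n : ℤ) :
    unitPart p ((p : ℚ_[p]) ^ n * u) = u := by
  have hp : (p : ℚ_[p]) ≠ 0 := NeZero.ne _
  rw [unitPart, valuation_zpow_mul hu, mul_right_comm, ← zpow_add₀ hp, add_neg_cancel,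
    zpow_zero, one_mul]

theorem norm_intCast_eq_zpow {r : ℤ} (hr : r ≠ 0) :
    ‖(r : ℚ_[p])‖ = (p : ℝ) ^ (-((r : ℚ_[p]).valuation.toNat : ℤ)) := by
  rw [Padic.norm_eq_zpow_neg_valuation (Int.cast_ne_zero.mpr hr), Int.toNat_of_nonneg]
  exact Padic.valuation_intCast (p := p) r ▸ Int.natCast_nonneg _

theorem zpow_bijOn_acIsOne {r : ℤ} (hr : r ≠ 0) {ℓ : ℕ} (hℓ : (r : ℚ_[p]).valuation.toNat < ℓ) :
    BijOn (· ^ r) {x : ℚ_[p] | acIsOne p ℓ x}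
      {y : ℚ_[p] | acIsOne p (ℓ + (r : ℚ_[p]).valuation.toNat) y ∧
        ∃ lam : ℤ, y.valuation = r * lam} := by
  have hp : (1 : ℝ) < p := Nat.one_lt_cast.mpr (Fact.out : p.Prime).one_lt
  have hε : (p : ℝ) ^ (-(ℓ : ℤ)) < ‖(r : ℚ_[p])‖ := by
    rw [norm_intCast_eq_zpow hr]; exact zpow_lt_zpow_right₀ hp (by omega)
  have hball : ‖(r : ℚ_[p])‖ * (p : ℝ) ^ (-(ℓ : ℤ)) =
      (p : ℝ) ^ (-((ℓ + (r : ℚ_[p]).valuation.toNat : ℕ) : ℤ)) := by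
    rw [norm_intCast_eq_zpow hr, ← zpow_add₀ (by positivity)]; push_cast; ring_nf
  obtain ⟨hmaps, hinj, hsurj⟩ := zpow_bijOn_closedBall_one hr hε
  rw [hball] at hmaps hsurj
  simp only [acIsOne_iff]
  refine ⟨?_, ?_, ?_⟩
  · rintro x ⟨hx, hxu⟩
    exact ⟨⟨zpow_ne_zero r hx, unitPart_zpow x r ▸ hmaps hxu⟩, x.valuation,
      Padic.valuation_zpow x r⟩
  · rintro x ⟨-, hxu⟩ y ⟨-, hyu⟩ hxy
    have hval : x.valuation = y.valuation :=
      mul_left_cancel₀ hr (by simpa using congrArg Padic.valuation hxy)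
    have hu : unitPart p x = unitPart p y :=
      hinj hxu hyu (by simpa only [unitPart_zpow] using congrArg (unitPart p) hxy)
    rw [← zpow_valuation_mul_unitPart x, ← zpow_valuation_mul_unitPart y, hval, hu]
  · rintro y ⟨⟨-, hyu⟩, lam, hlam⟩
    obtain ⟨u, hu, hur : u ^ r = unitPart p y⟩ := hsurj hyu
    have hu1 : ‖u‖ = 1 := norm_eq_one_of_norm_sub_one_lt_one <| by
      rw [mem_closedBall_iff_norm] at hu
      exact hu.trans_lt (hε.trans_le (IsUltrametricDist.norm_intCast_le_one _ r))
    have hu0 : u ≠ 0 := norm_ne_zero_iff.mp (hu1 ▸ one_ne_zero)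
    refine ⟨p ^ lam * u, ⟨mul_ne_zero (zpow_ne_zero _ (NeZero.ne _)) hu0,
      by rwa [unitPart_zpow_mul hu1]⟩, ?_⟩
    change ((p : ℚ_[p]) ^ lam * u) ^ r = y
    rw [mul_zpow, ← zpow_mul, hur, mul_comm lam, ← hlam, zpow_valuation_mul_unitPart]

end Padic

/-- For nonzero `r ∈ ℤ` there is `ℓ > 0` such that `x ↦ x^r` is a bijection from
`{x ∈ ℚ_p^× : ac_ℓ(x) = 1}` onto `{y ∈ ℚ_p^× : ac_{ℓ + v(r)}(y) = 1, v(y) ∈ rℤ}`. -/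
theorem zpow_bijOn_ac_one (r : ℤ) (hr : r ≠ 0) :
    ∃ ℓ : ℕ, 0 < ℓ ∧
      Set.BijOn (fun x : ℚ_[p] => x ^ r)
        {x : ℚ_[p] | acIsOne p ℓ x}
        {y : ℚ_[p] | acIsOne p (ℓ + ((r : ℚ_[p]).valuation).toNat) y ∧
          ∃ lam : ℤ, y.valuation = r * lam} :=
  ⟨(r : ℚ_[p]).valuation.toNat + 1, Nat.succ_pos _, zpow_bijOn_acIsOne hr (by omega)⟩

end KZ
end
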